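/- arXiv:2411.03530 — 2 statements merged into one kernel-verified Lean document; each statement's English description precedes it below -/
import Mathlib

section
/- Let M be as in the full-knowledge design: M = [[1, m, m/2],[m, s, s/2],[m/2, s/2, s/2]] with s > 0 and v = s − m² > 0. The (3,3) entry of M⁻¹ equals 4/s. Consequently, the variance of the OLS estimator of β₂ is (4/E[r²]) σ², where σ² is the residual variance. -/
/-- For the full-knowledge design matrix `M = [[1, m, m/2],[m, s, s/2],[m/2, s/2, s/2]]`
with `s = E[r²] > 0` and `v = s − m² > 0`, the `(3,3)` entry of `M⁻¹` is `4/s`.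
Consequently the variance of the OLS estimator of `β₂`, which equals this entry times the
residual variance `σ²`, is `(4/s) σ²`. -/
theorem stmt_9 (m s v : ℝ) (hv_def : v = s - m ^ 2) (hv : 0 < v) (hs : 0 < s) :
    (!![1, m, m/2; m, s, s/2; m/2, s/2, s/2] : Matrix (Fin 3) (Fin 3) ℝ)⁻¹ 2 2 = 4 / s ∧
      ∀ σ2 : ℝ,
        (!![1, m, m/2; m, s, s/2; m/2, s/2, s/2] : Matrix (Fin 3) (Fin 3) ℝ)⁻¹ 2 2 * σ2
          = (4 / s) * σ2 := by
  have key : (!![1, m, m/2; m, s, s/2; m/2, s/2, s/2] : Matrix (Fin 3) (Fin 3) ℝ)⁻¹ 2 2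
      = 4 / s := by
    simp [Matrix.inv_def, Matrix.det_fin_three, Matrix.adjugate_fin_three, Ring.inverse_eq_inv',
      Matrix.vecHead, Matrix.vecTail]
    have hsm : (0:ℝ) < s - m^2 := hv_def ▸ hv
    have hE : s * (s / 2) - s / 2 * (s / 2) - m * m * (s / 2) + m * (s / 2) * (m / 2) +
        m / 2 * m * (s / 2) - m / 2 * s * (m / 2) = s * (s - m^2) / 4 := by ring
    rw [hE, eq_div_iff hs.ne']
    field_simp
  exact ⟨key, fun σ2 => by rw [key]⟩
end

section
/- In OLS regression of y on (1, r, T·r) with balanced treatment independent of r, m = E[r], s = E[r²] > 0, v = s − m² > 0, the OLS estimate of β₂ is β̂₂ = (1/s)·(E[ry | T=1] − E[ry | T=0]). -/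
open MeasureTheory Matrix ProbabilityTheory

/-- In OLS regression of `y` on `(1, r, T·r)` with balanced binary treatment `T`
independent of `r`, `m = E[r]`, `s = E[r²] > 0`, `v = s − m² > 0`, the OLS estimate of
`β₂` (given by the normal equations `β̂ = ((1/N)XᵀX)⁻¹ (1/N)Xᵀy` with
`(1/N)XᵀX = [[1,m,m/2],[m,s,s/2],[m/2,s/2,s/2]]`) is
`β̂₂ = (1/s)(E[ry ∣ T=1] − E[ry ∣ T=0])`. -/
theorem stmt_16 {Ω : Type*} [MeasurableSpace Ω] (μ : Measure Ω) [IsProbabilityMeasure μ]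
    (T r y : Ω → ℝ) (m s : ℝ)
    (hT : ∀ ω, T ω = 0 ∨ T ω = 1) (hTmeas : Measurable T)
    (hbal1 : μ {ω | T ω = 1} = 1/2) (hbal0 : μ {ω | T ω = 0} = 1/2)
    (hindep : IndepFun r T μ)
    (hm : ∫ ω, r ω ∂μ = m) (hs : ∫ ω, (r ω) ^ 2 ∂μ = s)
    (hspos : 0 < s) (hvpos : 0 < s - m ^ 2)
    (hinty : Integrable y μ) (hintry : Integrable (fun ω => r ω * y ω) μ)
    (hintTry : Integrable (fun ω => T ω * r ω * y ω) μ) :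
    ((!![1, m, m/2; m, s, s/2; m/2, s/2, s/2] : Matrix (Fin 3) (Fin 3) ℝ)⁻¹
        *ᵥ ![∫ ω, y ω ∂μ, ∫ ω, r ω * y ω ∂μ, ∫ ω, T ω * r ω * y ω ∂μ]) 2
      = (1 / s) * ((∫ ω, r ω * y ω ∂(ProbabilityTheory.cond μ {ω' | T ω' = 1}))
          - ∫ ω, r ω * y ω ∂(ProbabilityTheory.cond μ {ω' | T ω' = 0})) := by
  have hs1 : MeasurableSet {ω | T ω = 1} := hTmeas (measurableSet_singleton 1)
  have hs0 : MeasurableSet {ω | T ω = 0} := hTmeas (measurableSet_singleton 0)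
  have hcompl : {ω | T ω = 0} = {ω | T ω = 1}ᶜ := by
    ext ω; simp only [Set.mem_compl_iff, Set.mem_setOf_eq]
    rcases hT ω with h | h <;> simp [h]
  -- indicator identity
  have hind : (fun ω => T ω * r ω * y ω)
      = Set.indicator {ω | T ω = 1} (fun ω => r ω * y ω) := by
    ext ω
    rcases hT ω with h | h
    · have : ω ∉ {ω | T ω = 1} := by simp [Set.mem_setOf_eq, h]
      simp [h, Set.indicator_of_notMem this]
    · have : ω ∈ {ω | T ω = 1} := by simp [Set.mem_setOf_eq, h]
      simp [h, Set.indicator_of_mem this]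
  have hI1 : ∫ ω in {ω | T ω = 1}, r ω * y ω ∂μ = ∫ ω, T ω * r ω * y ω ∂μ := by
    rw [hind, integral_indicator hs1]
  have hI0 : ∫ ω in {ω | T ω = 0}, r ω * y ω ∂μ
      = (∫ ω, r ω * y ω ∂μ) - ∫ ω, T ω * r ω * y ω ∂μ := by
    have := integral_add_compl hs1 hintry
    rw [hcompl]
    linarith [hI1, this]
  have hc1 : ∫ ω, r ω * y ω ∂(ProbabilityTheory.cond μ {ω' | T ω' = 1})
      = 2 * ∫ ω, T ω * r ω * y ω ∂μ := by
    rw [ProbabilityTheory.cond, integral_smul_measure, hbal1, ← hI1]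
    norm_num
  have hc0 : ∫ ω, r ω * y ω ∂(ProbabilityTheory.cond μ {ω' | T ω' = 0})
      = 2 * ((∫ ω, r ω * y ω ∂μ) - ∫ ω, T ω * r ω * y ω ∂μ) := by
    rw [ProbabilityTheory.cond, integral_smul_measure, hbal0, ← hI0]
    norm_num
  rw [hc1, hc0]
  have hdet : (!![1, m, m/2; m, s, s/2; m/2, s/2, s/2] : Matrix (Fin 3) (Fin 3) ℝ).det
      = s * (s - m ^ 2) / 4 := by
    simp [Matrix.det_fin_three, Matrix.cons_val_zero, Matrix.cons_val_one, Matrix.head_cons, Matrix.vecHead, Matrix.vecTail]; ring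
  have hdetne : (!![1, m, m/2; m, s, s/2; m/2, s/2, s/2] : Matrix (Fin 3) (Fin 3) ℝ).det ≠ 0 := by
    rw [hdet]; positivity
  rw [Matrix.inv_def, Ring.inverse_eq_inv', hdet, Matrix.adjugate_fin_three]
  simp [Matrix.mulVec, dotProduct, Fin.sum_univ_three]
  field_simp
  ring
end
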